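/- Let G₁ = K₅ and let G₂ be a graph vertex-disjoint from G₁ that has an oriented perfect path double cover. If G is obtained from G₁ ∪ G₂ by adding two edges uu' and vv' with u, v ∈ V(G₁) and u', v' ∈ V(G₂), then G has an oriented perfect path double cover. -/

import Mathlib

/-!
Attach to K₅ a pendant vertex at `u` and another at `v`. This seven-vertex graph has an
OPPDC in which no path joins the two pendants (continuing such a path as described next
could make it revisit its first vertex). Identify the pendants with `u'` and `v'`: a path
ending at a pendant is continued by the path of `H` starting at its partner, the two paths
starting at the pendants take the place of the paths of `H` at `u'` and `v'`, and the other
paths of `H` are kept. Each vertex of `H` is still the end of exactly one path, and each arc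
of `H` now lies in exactly one of the paths or continuations.
-/

/-- An oriented perfect path double cover: for each vertex `v`, a directed path
`P v` (a nonempty list of distinct vertices, consecutive ones adjacent) starting
at `v`, such that each vertex is the end of exactly one path, and each arc of the
symmetric orientation lies in exactly one path. -/
def HasOPPDC {V : Type*} (G : SimpleGraph V) : Prop :=
  ∃ P : V → List V,
    (∀ v, P v ≠ [] ∧ (P v).Nodup ∧ (P v).Chain' G.Adj ∧ (P v).head? = some v) ∧
    (∀ w : V, ∃! v, (P v).getLast? = some w) ∧
    (∀ a b : V, G.Adj a b → ∃! v, (a, b) ∈ (P v).zip (P v).tail)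

namespace List

variable {α β : Type*}

def arcs (l : List α) : List (α × α) := l.zip l.tail

@[simp] theorem arcs_nil : ([] : List α).arcs = [] := rfl

@[simp] theorem arcs_singleton (a : α) : [a].arcs = [] := rfl

@[simp] theorem arcs_cons_cons (a b : α) (l : List α) :
    (a :: b :: l).arcs = (a, b) :: (b :: l).arcs := rfl

theorem arcs_map (f : α → β) (l : List α) : (l.map f).arcs = l.arcs.map (Prod.map f f) := by
  rw [arcs, ← map_tail, zip_map, arcs]

theorem IsChain.rel_of_mem_arcs {R : α → α → Prop} {l : List α} (hl : l.IsChain R) {a b : α}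
    (h : (a, b) ∈ l.arcs) : R a b := by
  induction l with
  | nil => simp at h
  | cons x t ih =>
    rcases t with _ | ⟨y, s⟩
    · simp at h
    · rw [isChain_cons_cons] at hl
      rw [arcs_cons_cons, mem_cons, Prod.mk.injEq] at h
      rcases h with ⟨rfl, rfl⟩ | h
      exacts [hl.1, ih hl.2 h]

theorem arcs_append_tail {l₁ l₂ : List α} (h : l₁.getLast? = l₂.head?) :
    (l₁ ++ l₂.tail).arcs = l₁.arcs ++ l₂.arcs := by
  induction l₁ with
  | nil => cases l₂ <;> simp_all
  | cons x t ih =>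
    rcases t with _ | ⟨y, s⟩
    · rcases l₂ with _ | ⟨c, s⟩ <;> simp_all
    · rw [getLast?_cons_cons] at h
      have := ih h
      simp only [cons_append] at this ⊢
      rw [arcs_cons_cons, this, arcs_cons_cons, cons_append]

theorem getLast?_append_tail {l₁ l₂ : List α} (h : l₁.getLast? = l₂.head?) :
    (l₁ ++ l₂.tail).getLast? = l₂.getLast? := by
  rcases l₂ with _ | ⟨c, _ | ⟨d, s⟩⟩
  · simp_all
  · simp_all
  · cases h' : (d :: s).getLast? <;> simp_all [getLast?_append]

theorem IsChain.append_tail {R : α → α → Prop} {l₁ l₂ : List α} (h₁ : l₁.IsChain R)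
    (h₂ : l₂.IsChain R) (h : l₁.getLast? = l₂.head?) : (l₁ ++ l₂.tail).IsChain R := by
  refine isChain_append.mpr ⟨h₁, h₂.tail, ?_⟩
  rcases l₂ with _ | ⟨c, _ | ⟨d, s⟩⟩
  · simp
  · simp
  · rw [h]
    simpa using (isChain_cons_cons.mp h₂).1

theorem Nodup.not_mem_tail_of_head?_eq {l : List α} {a : α} (hl : l.Nodup)
    (h : l.head? = some a) : a ∉ l.tail := by
  rcases l with _ | ⟨b, t⟩
  · simp
  · simp_all [nodup_cons]

end List

structure IsOPPDC {V : Type*} (G : SimpleGraph V) (P : V → List V) : Prop where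
  ne_nil : ∀ v, P v ≠ []
  nodup : ∀ v, (P v).Nodup
  isChain : ∀ v, (P v).IsChain G.Adj
  head? : ∀ v, (P v).head? = some v
  existsUnique_getLast? : ∀ w, ∃! v, (P v).getLast? = some w
  existsUnique_mem_arcs : ∀ a b, G.Adj a b → ∃! v, (a, b) ∈ (P v).arcs

theorem hasOPPDC_iff_exists_isOPPDC {V : Type*} {G : SimpleGraph V} :
    HasOPPDC G ↔ ∃ P, IsOPPDC G P :=
  ⟨fun ⟨P, h₁, h₂, h₃⟩ => ⟨P, ⟨fun v => (h₁ v).1, fun v => (h₁ v).2.1, fun v => (h₁ v).2.2.1,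
      fun v => (h₁ v).2.2.2, h₂, h₃⟩⟩,
    fun ⟨P, h⟩ => ⟨P, fun v => ⟨h.ne_nil v, h.nodup v, h.isChain v, h.head? v⟩,
      h.existsUnique_getLast?, h.existsUnique_mem_arcs⟩⟩

namespace IsOPPDC

variable {V V' : Type*} {G : SimpleGraph V} {G' : SimpleGraph V'} {P : V → List V}

theorem exists_getLast?_eq (hP : IsOPPDC G P) (v : V) : ∃ w, (P v).getLast? = some w :=
  Option.isSome_iff_exists.mp (List.getLast?_isSome.mpr (hP.ne_nil v))

theorem map (hP : IsOPPDC G P) (e : G ≃g G') : IsOPPDC G' fun x => (P (e.symm x)).map e where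
  ne_nil x := by simpa using hP.ne_nil _
  nodup x := (hP.nodup _).map e.injective
  isChain x := (List.isChain_map _).mpr ((hP.isChain _).imp fun _ _ h => e.map_adj_iff.mpr h)
  head? x := by simp [List.head?_map, hP.head?]
  existsUnique_getLast? w := by
    obtain ⟨x, hx, huniq⟩ := hP.existsUnique_getLast? (e.symm w)
    refine ⟨e x, by simp [List.getLast?_map, hx], fun y hy => ?_⟩
    obtain ⟨a, ha, rfl⟩ := by simpa [List.getLast?_map] using hy
    rw [← e.apply_symm_apply y, huniq (e.symm y) (by simpa using ha)]
  existsUnique_mem_arcs a b hab := by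
    obtain ⟨x, hx, huniq⟩ :=
      hP.existsUnique_mem_arcs (e.symm a) (e.symm b) (e.symm.map_adj_iff.mpr hab)
    refine ⟨e x, ?_, fun y hy => ?_⟩
    · simpa [List.arcs_map] using ⟨_, _, hx, e.apply_symm_apply a, e.apply_symm_apply b⟩
    · obtain ⟨a, b, hmem, rfl, rfl⟩ := by simpa [List.arcs_map] using hy
      rw [← e.apply_symm_apply y, huniq (e.symm y) (by simpa using hmem)]

end IsOPPDC

theorem HasOPPDC.map {V V' : Type*} {G : SimpleGraph V} {G' : SimpleGraph V'} (h : HasOPPDC G)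
    (e : G ≃g G') : HasOPPDC G' := by
  obtain ⟨P, hP⟩ := hasOPPDC_iff_exists_isOPPDC.mp h
  exact hasOPPDC_iff_exists_isOPPDC.mpr ⟨_, hP.map e⟩

namespace SimpleGraph

variable {V₁ V₁' V₂ : Type*}

def twoEdgeSum (G₁ : SimpleGraph V₁) (G₂ : SimpleGraph V₂) (u v : V₁) (u' v' : V₂) :
    SimpleGraph (V₁ ⊕ V₂) where
  Adj
    | .inl x, .inl y => G₁.Adj x y
    | .inr x, .inr y => G₂.Adj x y
    | .inl x, .inr y => x = u ∧ y = u' ∨ x = v ∧ y = v'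
    | .inr y, .inl x => x = u ∧ y = u' ∨ x = v ∧ y = v'
  symm := ⟨by
    rintro (x | x) (y | y) h
    exacts [h.symm, h, h, h.symm]⟩
  loopless := ⟨by
    rintro (x | x) h
    exacts [G₁.loopless.irrefl x h, G₂.loopless.irrefl x h]⟩

instance [DecidableEq V₁] [DecidableEq V₂] (G₁ : SimpleGraph V₁) (G₂ : SimpleGraph V₂)
    [DecidableRel G₁.Adj] [DecidableRel G₂.Adj] (u v : V₁) (u' v' : V₂) :
    DecidableRel (twoEdgeSum G₁ G₂ u v u' v').Adj
  | .inl x, .inl y => inferInstanceAs (Decidable (G₁.Adj x y))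
  | .inr x, .inr y => inferInstanceAs (Decidable (G₂.Adj x y))
  | .inl x, .inr y => inferInstanceAs (Decidable (x = u ∧ y = u' ∨ x = v ∧ y = v'))
  | .inr y, .inl x => inferInstanceAs (Decidable (x = u ∧ y = u' ∨ x = v ∧ y = v'))

variable {G₁ : SimpleGraph V₁} {G₂ : SimpleGraph V₂} {u v : V₁} {u' v' : V₂}

@[simp] theorem twoEdgeSum_adj_inl_inl {x y : V₁} :
    (twoEdgeSum G₁ G₂ u v u' v').Adj (.inl x) (.inl y) ↔ G₁.Adj x y := Iff.rfl

@[simp] theorem twoEdgeSum_adj_inr_inr {x y : V₂} :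
    (twoEdgeSum G₁ G₂ u v u' v').Adj (.inr x) (.inr y) ↔ G₂.Adj x y := Iff.rfl

@[simp] theorem twoEdgeSum_adj_inl_inr {x : V₁} {y : V₂} :
    (twoEdgeSum G₁ G₂ u v u' v').Adj (.inl x) (.inr y) ↔ x = u ∧ y = u' ∨ x = v ∧ y = v' :=
  Iff.rfl

@[simp] theorem twoEdgeSum_adj_inr_inl {x : V₁} {y : V₂} :
    (twoEdgeSum G₁ G₂ u v u' v').Adj (.inr y) (.inl x) ↔ x = u ∧ y = u' ∨ x = v ∧ y = v' :=
  Iff.rfl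

theorem fromRel_eq_twoEdgeSum (G₂ : SimpleGraph V₂) (u v : V₁) (u' v' : V₂) :
    SimpleGraph.fromRel (fun a b : V₁ ⊕ V₂ =>
        (∃ x y : V₁, a = Sum.inl x ∧ b = Sum.inl y) ∨
        (∃ x y : V₂, a = Sum.inr x ∧ b = Sum.inr y ∧ G₂.Adj x y) ∨
        (a = Sum.inl u ∧ b = Sum.inr u') ∨
        (a = Sum.inl v ∧ b = Sum.inr v')) =
      twoEdgeSum (completeGraph V₁) G₂ u v u' v' := by
  ext (x | x) (y | y) <;> simp [G₂.adj_comm, and_iff_right_of_imp G₂.ne_of_adj]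

def Iso.twoEdgeSumCongrLeft {G₁' : SimpleGraph V₁'} (e : G₁ ≃g G₁') :
    twoEdgeSum G₁ G₂ u v u' v' ≃g twoEdgeSum G₁' G₂ (e u) (e v) u' v' where
  toEquiv := Equiv.sumCongr e.toEquiv (Equiv.refl V₂)
  map_rel_iff' {a b} := by
    rcases a with x | x <;> rcases b with y | y <;> simp [e.injective.eq_iff, e.map_adj_iff]

abbrev withPendants (G₁ : SimpleGraph V₁) (u v : V₁) : SimpleGraph (V₁ ⊕ Bool) :=
  twoEdgeSum G₁ ⊥ u v false true

def pendantMap (u' v' : V₂) : V₁ ⊕ Bool → V₁ ⊕ V₂ :=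
  Sum.map id fun b => cond b v' u'

@[simp] theorem pendantMap_inl (x : V₁) : pendantMap u' v' (.inl x) = .inl x := rfl

@[simp] theorem pendantMap_inr (b : Bool) :
    pendantMap (V₁ := V₁) u' v' (.inr b) = .inr (cond b v' u') := rfl

theorem pendantMap_injective (h : u' ≠ v') : Function.Injective (pendantMap (V₁ := V₁) u' v') :=
  Function.injective_id.sumMap (Bool.injective_iff.mpr h)

theorem adj_pendantMap {a b : V₁ ⊕ Bool} (h : (withPendants G₁ u v).Adj a b) :
    (twoEdgeSum G₁ G₂ u v u' v').Adj (pendantMap u' v' a) (pendantMap u' v' b) := by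
  rcases a with x | (_ | _) <;> rcases b with y | (_ | _) <;> simp_all

theorem pendantMap_prod_ne_inr {a b : V₁ ⊕ Bool} (h : (withPendants G₁ u v).Adj a b)
    (a' b' : V₂) : (pendantMap u' v' a, pendantMap u' v' b) ≠ (.inr a', .inr b') := by
  rcases a with x | x <;> rcases b with y | y <;> simp_all

theorem exists_eq_pendantMap_or_eq_inr (y : V₁ ⊕ V₂) :
    (∃ z, y = pendantMap u' v' z) ∨ ∃ w, w ≠ u' ∧ w ≠ v' ∧ y = .inr w := by
  rcases y with x | w
  · exact .inl ⟨.inl x, rfl⟩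
  by_cases hu : w = u'
  · exact .inl ⟨.inr false, by simp [hu]⟩
  by_cases hv : w = v'
  · exact .inl ⟨.inr true, by simp [hv]⟩
  exact .inr ⟨w, hu, hv, rfl⟩

theorem twoEdgeSum_adj_cases {a b : V₁ ⊕ V₂} (h : (twoEdgeSum G₁ G₂ u v u' v').Adj a b) :
    (∃ a' b', G₂.Adj a' b' ∧ a = .inr a' ∧ b = .inr b') ∨
      ∃ a₀ b₀, (withPendants G₁ u v).Adj a₀ b₀ ∧
        a = pendantMap u' v' a₀ ∧ b = pendantMap u' v' b₀ := by
  rcases a with x | x <;> rcases b with y | y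
  · exact .inr ⟨.inl x, .inl y, h, rfl, rfl⟩
  · rcases h with ⟨rfl, rfl⟩ | ⟨rfl, rfl⟩
    exacts [.inr ⟨.inl _, .inr false, by simp, rfl, rfl⟩,
      .inr ⟨.inl _, .inr true, by simp, rfl, rfl⟩]
  · rcases h with ⟨rfl, rfl⟩ | ⟨rfl, rfl⟩
    exacts [.inr ⟨.inr false, .inl _, by simp, rfl, rfl⟩,
      .inr ⟨.inr true, .inl _, by simp, rfl, rfl⟩]
  · exact .inl ⟨x, y, h, rfl, rfl⟩

theorem existsUnique_of_pendantMap {Φ : V₁ ⊕ V₂ → Prop} {ψ : V₁ ⊕ Bool → Prop}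
    (hψ : ∃! z, ψ z) (hmap : ∀ z, Φ (pendantMap u' v' z) ↔ ψ z)
    (hinr : ∀ w, w ≠ u' → w ≠ v' → ¬Φ (.inr w)) : ∃! y, Φ y := by
  obtain ⟨z, hz, huniq⟩ := hψ
  refine ⟨pendantMap u' v' z, (hmap z).2 hz, fun y hy => ?_⟩
  rcases exists_eq_pendantMap_or_eq_inr (u' := u') (v' := v') y with ⟨z', rfl⟩ | ⟨w, hu, hv, rfl⟩
  · rw [huniq z' ((hmap z').1 hy)]
  · exact absurd hy (hinr w hu hv)

-- An end or arc of `G₂` lies either on a path of `P` that is kept, or on the continuation of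
-- the unique path of `Q` that ends at the pendant identified with the start of its `P`-path.
theorem existsUnique_of_pendantMap_of_partner (huv' : u' ≠ v') {Φ : V₁ ⊕ V₂ → Prop}
    {p : V₂ → Prop} {q : V₁ ⊕ Bool → Bool → Prop} (hp : ∃! w, p w) (hq : ∀ b, ∃! z, q z b)
    (hmap : ∀ z, Φ (pendantMap u' v' z) ↔ ∃ b, q z b ∧ p (cond b v' u'))
    (hinr : ∀ w, w ≠ u' → w ≠ v' → (Φ (.inr w) ↔ p w)) : ∃! y, Φ y := by
  obtain ⟨w₀, hw₀, huniq⟩ := hp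
  by_cases hpartner : ∃ b, cond b v' u' = w₀
  · obtain ⟨b₀, rfl⟩ := hpartner
    obtain ⟨z₀, hz₀, hzuniq⟩ := hq b₀
    refine ⟨pendantMap u' v' z₀, (hmap z₀).2 ⟨b₀, hz₀, hw₀⟩, fun y hy => ?_⟩
    rcases exists_eq_pendantMap_or_eq_inr (u' := u') (v' := v') y with
      ⟨z, rfl⟩ | ⟨w, hu, hv, rfl⟩
    · obtain ⟨b, hzb, hpb⟩ := (hmap z).1 hy
      obtain rfl : b = b₀ :=
        (Bool.injective_iff (f := fun b => cond b v' u')).mpr huv' (huniq _ hpb)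
      rw [hzuniq z hzb]
    · have := huniq w ((hinr w hu hv).1 hy)
      cases b₀ <;> simp only [cond_false, cond_true] at this <;> contradiction
  · simp only [not_exists] at hpartner
    refine ⟨.inr w₀, (hinr w₀ (Ne.symm (hpartner false)) (Ne.symm (hpartner true))).2 hw₀,
      fun y hy => ?_⟩
    rcases exists_eq_pendantMap_or_eq_inr (u' := u') (v' := v') y with
      ⟨z, rfl⟩ | ⟨w, hu, hv, rfl⟩
    · obtain ⟨b, -, hpb⟩ := (hmap z).1 hy
      exact absurd (huniq _ hpb) (hpartner b)
    · rw [huniq w ((hinr w hu hv).1 hy)]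

section Glue

variable (u' v') (P : V₂ → List V₂)

def continuation : V₁ ⊕ Bool → List (V₁ ⊕ V₂)
  | .inl x => [.inl x]
  | .inr b => (P (cond b v' u')).map .inr

/-- A path of `withPendants G₁ u v` ending at a pendant is continued along the path of `P`
starting at the partner of that pendant. -/
def extendPath (l : List (V₁ ⊕ Bool)) : List (V₁ ⊕ V₂) :=
  l.map (pendantMap u' v') ++ (l.getLast?.elim [] (continuation u' v' P)).tail

def gluedPaths [DecidableEq V₂] (Q : V₁ ⊕ Bool → List (V₁ ⊕ Bool)) :
    V₁ ⊕ V₂ → List (V₁ ⊕ V₂)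
  | .inl x => extendPath u' v' P (Q (.inl x))
  | .inr w =>
    if w = u' then extendPath u' v' P (Q (.inr false))
    else if w = v' then extendPath u' v' P (Q (.inr true))
    else (P w).map .inr

variable {u' v' P} {Q : V₁ ⊕ Bool → List (V₁ ⊕ Bool)} {l : List (V₁ ⊕ Bool)} {y : V₁ ⊕ Bool}

theorem gluedPaths_pendantMap [DecidableEq V₂] (huv' : u' ≠ v') (z : V₁ ⊕ Bool) :
    gluedPaths u' v' P Q (pendantMap u' v' z) = extendPath u' v' P (Q z) := by
  rcases z with x | (_ | _) <;> simp [gluedPaths, huv'.symm]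

theorem gluedPaths_inr [DecidableEq V₂] {w : V₂} (hu : w ≠ u') (hv : w ≠ v') :
    gluedPaths u' v' P Q (.inr w) = (P w).map .inr := by
  simp [gluedPaths, hu, hv]

theorem extendPath_of_getLast? (h : l.getLast? = some y) :
    extendPath u' v' P l = l.map (pendantMap u' v') ++ (continuation u' v' P y).tail := by
  simp [extendPath, h]

theorem eq_inr_of_mem_arcs_continuation {c d : V₁ ⊕ V₂}
    (h : (c, d) ∈ (continuation u' v' P y).arcs) : ∃ a' b', (c, d) = (.inr a', .inr b') := by
  rcases y with x | b
  · simp [continuation] at h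
  · obtain ⟨a', b', -, rfl, rfl⟩ := by simpa [continuation, List.arcs_map] using h
    exact ⟨a', b', rfl⟩

theorem head?_continuation (hP : IsOPPDC G₂ P) (y : V₁ ⊕ Bool) :
    (continuation u' v' P y).head? = some (pendantMap u' v' y) := by
  rcases y with x | b <;> simp [continuation, hP.head?]

theorem isChain_continuation (hP : IsOPPDC G₂ P) (y : V₁ ⊕ Bool) :
    (continuation u' v' P y).IsChain (twoEdgeSum G₁ G₂ u v u' v').Adj := by
  rcases y with x | b
  · exact List.isChain_singleton _
  · exact (List.isChain_map _).mpr ((hP.isChain _).imp fun _ _ h => h)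

theorem nodup_continuation (hP : IsOPPDC G₂ P) (y : V₁ ⊕ Bool) :
    (continuation u' v' P y).Nodup := by
  rcases y with x | b
  · exact List.nodup_singleton _
  · exact (hP.nodup _).map Sum.inr_injective

theorem getLast?_map_pendantMap_eq_head? (hP : IsOPPDC G₂ P) (h : l.getLast? = some y) :
    (l.map (pendantMap u' v')).getLast? = (continuation u' v' P y).head? := by
  rw [List.getLast?_map, h, head?_continuation hP]
  rfl

theorem getLast?_extendPath (hP : IsOPPDC G₂ P) (h : l.getLast? = some y) :
    (extendPath u' v' P l).getLast? = (continuation u' v' P y).getLast? := by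
  rw [extendPath_of_getLast? h,
    List.getLast?_append_tail (getLast?_map_pendantMap_eq_head? hP h)]

theorem arcs_extendPath (hP : IsOPPDC G₂ P) (h : l.getLast? = some y) :
    (extendPath u' v' P l).arcs =
      l.arcs.map (Prod.map (pendantMap u' v') (pendantMap u' v')) ++
        (continuation u' v' P y).arcs := by
  rw [extendPath_of_getLast? h, List.arcs_append_tail (getLast?_map_pendantMap_eq_head? hP h),
    List.arcs_map]

theorem head?_extendPath (hQ : IsOPPDC (withPendants G₁ u v) Q) (z : V₁ ⊕ Bool) :
    (extendPath u' v' P (Q z)).head? = some (pendantMap u' v' z) := by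
  simp [extendPath, List.head?_append, hQ.head? z]

theorem isChain_extendPath (hP : IsOPPDC G₂ P) (hQ : IsOPPDC (withPendants G₁ u v) Q)
    (z : V₁ ⊕ Bool) : (extendPath u' v' P (Q z)).IsChain (twoEdgeSum G₁ G₂ u v u' v').Adj := by
  obtain ⟨y, hy⟩ := hQ.exists_getLast?_eq z
  rw [extendPath_of_getLast? hy]
  exact ((List.isChain_map _).mpr ((hQ.isChain z).imp fun _ _ => adj_pendantMap)).append_tail
    (isChain_continuation hP y) (getLast?_map_pendantMap_eq_head? hP hy)

theorem nodup_extendPath (huv' : u' ≠ v') (hP : IsOPPDC G₂ P)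
    (hQ : IsOPPDC (withPendants G₁ u v) Q)
    (hleaf : ∀ z b b', (Q z).getLast? = some (.inr b) → .inr b' ∉ (Q z).dropLast)
    (z : V₁ ⊕ Bool) : (extendPath u' v' P (Q z)).Nodup := by
  obtain ⟨y, hy⟩ := hQ.exists_getLast?_eq z
  rw [extendPath_of_getLast? hy, List.nodup_append]
  refine ⟨(hQ.nodup z).map (pendantMap_injective huv'), (nodup_continuation hP y).tail, ?_⟩
  rintro _ ha c hc rfl
  obtain ⟨a, ha, rfl⟩ := List.mem_map.mp ha
  rcases y with x | b
  · simp [continuation] at hc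
  rw [continuation, ← List.map_tail] at hc
  obtain ⟨t, ht, hta⟩ := List.mem_map.mp hc
  rcases a with x | b'
  · simp at hta
  have hmem : Sum.inr b' ∈ (Q z).dropLast ++ [.inr b] := by
    rwa [List.dropLast_append_getLast? _ hy]
  rcases List.mem_append.mp hmem with hdrop | hlast
  · exact hleaf z b b' hy hdrop
  obtain rfl : b' = b := by simpa using hlast
  obtain rfl : t = cond b' v' u' := by simpa using hta
  exact (hP.nodup _).not_mem_tail_of_head?_eq (hP.head? _) ht

theorem not_mem_map_arcs_inr (hQ : IsOPPDC (withPendants G₁ u v) Q) (z : V₁ ⊕ Bool)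
    (a' b' : V₂) :
    (.inr a', .inr b') ∉ (Q z).arcs.map (Prod.map (pendantMap u' v') (pendantMap u' v')) := by
  rintro hmem
  obtain ⟨⟨c, d⟩, hcd, heq⟩ := List.mem_map.mp hmem
  exact pendantMap_prod_ne_inr ((hQ.isChain z).rel_of_mem_arcs hcd) a' b' heq

theorem gluedPaths_isPath [DecidableEq V₂] (huv' : u' ≠ v') (hP : IsOPPDC G₂ P)
    (hQ : IsOPPDC (withPendants G₁ u v) Q)
    (hleaf : ∀ z b b', (Q z).getLast? = some (.inr b) → .inr b' ∉ (Q z).dropLast)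
    (y : V₁ ⊕ V₂) :
    gluedPaths u' v' P Q y ≠ [] ∧ (gluedPaths u' v' P Q y).Nodup ∧
      (gluedPaths u' v' P Q y).IsChain (twoEdgeSum G₁ G₂ u v u' v').Adj ∧
      (gluedPaths u' v' P Q y).head? = some y := by
  rcases exists_eq_pendantMap_or_eq_inr (u' := u') (v' := v') y with
    ⟨z, rfl⟩ | ⟨w, hu, hv, rfl⟩
  · rw [gluedPaths_pendantMap huv']
    exact ⟨List.ne_nil_of_mem (List.mem_of_mem_head? (head?_extendPath hQ z)),
      nodup_extendPath huv' hP hQ hleaf z, isChain_extendPath hP hQ z, head?_extendPath hQ z⟩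
  · rw [gluedPaths_inr hu hv]
    exact ⟨by simpa using hP.ne_nil w, (hP.nodup w).map Sum.inr_injective,
      (List.isChain_map _).mpr ((hP.isChain w).imp fun _ _ h => h), by simp [hP.head?]⟩

theorem existsUnique_gluedPaths_getLast? [DecidableEq V₂] (huv' : u' ≠ v') (hP : IsOPPDC G₂ P)
    (hQ : IsOPPDC (withPendants G₁ u v) Q) (t : V₁ ⊕ V₂) :
    ∃! y, (gluedPaths u' v' P Q y).getLast? = some t := by
  rcases t with x | t
  · refine existsUnique_of_pendantMap (u' := u') (v' := v')
      (hQ.existsUnique_getLast? (.inl x)) (fun z => ?_)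
      fun w hu hv => by simp [gluedPaths_inr hu hv, List.getLast?_map]
    obtain ⟨y, hy⟩ := hQ.exists_getLast?_eq z
    rw [gluedPaths_pendantMap huv', getLast?_extendPath hP hy, hy]
    rcases y with x' | b <;> simp [continuation, List.getLast?_map]
  · refine existsUnique_of_pendantMap_of_partner huv' (hP.existsUnique_getLast? t)
      (fun b => hQ.existsUnique_getLast? (.inr b)) (fun z => ?_)
      fun w hu hv => by simp [gluedPaths_inr hu hv, List.getLast?_map]
    obtain ⟨y, hy⟩ := hQ.exists_getLast?_eq z
    rw [gluedPaths_pendantMap huv', getLast?_extendPath hP hy, hy]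
    rcases y with x' | b <;> simp [continuation, List.getLast?_map]

theorem existsUnique_gluedPaths_mem_arcs [DecidableEq V₂] (huv' : u' ≠ v')
    (hP : IsOPPDC G₂ P) (hQ : IsOPPDC (withPendants G₁ u v) Q) {a b : V₁ ⊕ V₂}
    (hab : (twoEdgeSum G₁ G₂ u v u' v').Adj a b) :
    ∃! y, (a, b) ∈ (gluedPaths u' v' P Q y).arcs := by
  rcases twoEdgeSum_adj_cases hab with ⟨a', b', hab', rfl, rfl⟩ | ⟨a₀, b₀, hab₀, rfl, rfl⟩
  · refine existsUnique_of_pendantMap_of_partner huv' (hP.existsUnique_mem_arcs a' b' hab')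
      (fun c => hQ.existsUnique_getLast? (.inr c)) (fun z => ?_)
      fun w hu hv => by simp [gluedPaths_inr hu hv, List.arcs_map]
    obtain ⟨y, hy⟩ := hQ.exists_getLast?_eq z
    rw [gluedPaths_pendantMap huv', arcs_extendPath hP hy, hy, List.mem_append,
      or_iff_right (not_mem_map_arcs_inr hQ z a' b')]
    rcases y with x' | c <;> simp [continuation, List.arcs_map]
  · refine existsUnique_of_pendantMap (u' := u') (v' := v')
      (hQ.existsUnique_mem_arcs a₀ b₀ hab₀) (fun z => ?_) fun w hu hv hmem => ?_
    · obtain ⟨y, hy⟩ := hQ.exists_getLast?_eq z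
      have hι := pendantMap_injective (V₁ := V₁) huv'
      rw [gluedPaths_pendantMap huv', arcs_extendPath hP hy, List.mem_append,
        ← List.mem_map_of_injective (hι.prodMap hι)]
      refine or_iff_left fun hmem => ?_
      obtain ⟨a', b', heq⟩ := eq_inr_of_mem_arcs_continuation hmem
      exact pendantMap_prod_ne_inr hab₀ a' b' heq
    · rw [gluedPaths_inr hu hv, List.arcs_map] at hmem
      obtain ⟨⟨a', b'⟩, -, heq⟩ := List.mem_map.mp hmem
      exact pendantMap_prod_ne_inr hab₀ a' b' heq.symm

theorem isOPPDC_gluedPaths [DecidableEq V₂] (huv' : u' ≠ v') (hP : IsOPPDC G₂ P)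
    (hQ : IsOPPDC (withPendants G₁ u v) Q)
    (hleaf : ∀ z b b', (Q z).getLast? = some (.inr b) → .inr b' ∉ (Q z).dropLast) :
    IsOPPDC (twoEdgeSum G₁ G₂ u v u' v') (gluedPaths u' v' P Q) where
  ne_nil y := (gluedPaths_isPath huv' hP hQ hleaf y).1
  nodup y := (gluedPaths_isPath huv' hP hQ hleaf y).2.1
  isChain y := (gluedPaths_isPath huv' hP hQ hleaf y).2.2.1
  head? y := (gluedPaths_isPath huv' hP hQ hleaf y).2.2.2
  existsUnique_getLast? := existsUnique_gluedPaths_getLast? huv' hP hQ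
  existsUnique_mem_arcs _ _ := existsUnique_gluedPaths_mem_arcs huv' hP hQ

end Glue

theorem HasOPPDC.twoEdgeSum {Q : V₁ ⊕ Bool → List (V₁ ⊕ Bool)} (huv' : u' ≠ v')
    (hG₂ : HasOPPDC G₂) (hQ : IsOPPDC (withPendants G₁ u v) Q)
    (hleaf : ∀ z b b', (Q z).getLast? = some (.inr b) → .inr b' ∉ (Q z).dropLast) :
    HasOPPDC (twoEdgeSum G₁ G₂ u v u' v') := by
  classical
  obtain ⟨P, hP⟩ := hasOPPDC_iff_exists_isOPPDC.mp hG₂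
  exact hasOPPDC_iff_exists_isOPPDC.mpr ⟨_, isOPPDC_gluedPaths huv' hP hQ hleaf⟩

end SimpleGraph

-- Core's `BEq` instance on sums comes without `LawfulBEq`, which `decide` needs to decide
-- membership in lists of vertices of `Fin 5 ⊕ Bool`.
instance {α β : Type*} [BEq α] [BEq β] [LawfulBEq α] [LawfulBEq β] : LawfulBEq (α ⊕ β) where
  eq_of_beq {a b} h := by cases a <;> cases b <;> simp_all [BEq.beq, Sum.instBEq.beq]
  rfl {a} := by cases a <;> simp [BEq.beq, Sum.instBEq.beq]

namespace SimpleGraph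

def k5PendantCover : Fin 5 ⊕ Bool → List (Fin 5 ⊕ Bool)
  | .inl 0 => [.inl 0, .inr false]
  | .inl 1 => [1, 3, 0, 4, 2].map .inl
  | .inl 2 => [2, 4, 3, 1].map .inl ++ [.inr true]
  | .inl 3 => [3, 2, 1, 4, 0].map .inl
  | .inl 4 => [4, 1, 2, 0, 3].map .inl
  | .inr false => [.inr false, .inl 0, .inl 1]
  | .inr true => .inr true :: [1, 0, 2, 3, 4].map .inl

set_option synthInstance.maxSize 1000 in
theorem isOPPDC_k5PendantCover :
    IsOPPDC (withPendants (completeGraph (Fin 5)) 0 1) k5PendantCover where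
  ne_nil := by decide
  nodup := by decide
  isChain := by decide
  head? := by decide
  existsUnique_getLast? := by unfold ExistsUnique; decide
  existsUnique_mem_arcs := by unfold ExistsUnique; beta_reduce; decide

theorem inr_not_mem_dropLast_k5PendantCover (z : Fin 5 ⊕ Bool) (b b' : Bool) :
    (k5PendantCover z).getLast? = some (.inr b) → .inr b' ∉ (k5PendantCover z).dropLast := by
  revert z b b'
  decide

end SimpleGraph

theorem Equiv.Perm.exists_apply_eq_apply_eq {α : Type*} [DecidableEq α] {a b u v : α}
    (hab : a ≠ b) (huv : u ≠ v) : ∃ σ : Equiv.Perm α, σ a = u ∧ σ b = v := by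
  refine ⟨Equiv.swap a u * Equiv.swap b (Equiv.swap a u v), ?_, by simp⟩
  have ha : a ≠ Equiv.swap a u v := by
    rw [Ne, eq_comm, Equiv.swap_apply_eq_iff, Equiv.swap_apply_left]
    exact huv.symm
  rw [Perm.mul_apply, Equiv.swap_apply_of_ne_of_ne hab ha, Equiv.swap_apply_left]

open SimpleGraph in
theorem K5_graph_two_edges_general {W : Type*} (H : SimpleGraph W)
    (hH : HasOPPDC H)
    (u v : Fin 5) (u' v' : W) (huv : u ≠ v) (huv' : u' ≠ v') :
    HasOPPDC (SimpleGraph.fromRel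
      (fun a b : Fin 5 ⊕ W =>
        (∃ x y : Fin 5, a = Sum.inl x ∧ b = Sum.inl y) ∨
        (∃ x y : W, a = Sum.inr x ∧ b = Sum.inr y ∧ H.Adj x y) ∨
        (a = Sum.inl u ∧ b = Sum.inr u') ∨
        (a = Sum.inl v ∧ b = Sum.inr v'))) := by
  obtain ⟨σ, rfl, rfl⟩ := Equiv.Perm.exists_apply_eq_apply_eq (by decide : (0 : Fin 5) ≠ 1) huv
  rw [fromRel_eq_twoEdgeSum]
  exact (hH.twoEdgeSum huv' isOPPDC_k5PendantCover inr_not_mem_dropLast_k5PendantCover).map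
    (Iso.twoEdgeSumCongrLeft (Iso.completeGraph σ))

/-- K₅ and a graph `H` with an OPPDC, joined by two edges
`uu'` and `vv'`, give a graph with an OPPDC. -/
theorem K5_graph_two_edges {W : Type*} [Fintype W] (H : SimpleGraph W)
    (hH : HasOPPDC H)
    (u v : Fin 5) (u' v' : W) (huv : u ≠ v) (huv' : u' ≠ v') :
    HasOPPDC (SimpleGraph.fromRel
      (fun a b : Fin 5 ⊕ W =>
        (∃ x y : Fin 5, a = Sum.inl x ∧ b = Sum.inl y) ∨
        (∃ x y : W, a = Sum.inr x ∧ b = Sum.inr y ∧ H.Adj x y) ∨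
        (a = Sum.inl u ∧ b = Sum.inr u') ∨
        (a = Sum.inl v ∧ b = Sum.inr v'))) :=
  K5_graph_two_edges_general H hH u v u' v' huv huv'
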